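/- Let H be a group equipped with a linear order < such that h < g implies hk < gk for all h, g, k ∈ H, let R = ℤH, and let R^{>0} = {r ∈ R : r ≠ 0 and the coefficient of r at the maximal element of its support is positive}, which is a multiplicative submonoid of R containing 1. Then the group of invertible elements of the monoid R^{>0} is exactly {single h 1 : h ∈ H}; i.e., u ∈ R^{>0} has a multiplicative inverse in R^{>0} if and only if u = h for some h ∈ H. -/

import Mathlib

/-!
A right-ordered group has two unique products (`TwoUniqueProds`): among the products of two
finite sets, the largest and the smallest are each realised by exactly one pair. If `u * v = 1`
in `R[G]` and the supports were not both singletons, two distinct uniquely realised products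
`a * b` would have coefficient `u a * v b ≠ 0` in `1`, so both would equal `1`, contradicting
uniqueness. Hence `u = r • g` with `r * s = 1`, and positivity forces `r = 1` in `ℤ`.
-/

/-- A nonzero element of the group ring `ℤH` is positive if its coefficient at the
maximal element of its support is a positive integer. -/
def MonoidAlgebra.IsPositive {H : Type*} [LinearOrder H] (r : MonoidAlgebra ℤ H) : Prop :=
  ∃ hne : r.coeff.support.Nonempty, 0 < r.coeff (r.coeff.support.max' hne)

open Finset

namespace MonoidAlgebra

section UniqueProds

variable {R G : Type*} [Semiring R] [NoZeroDivisors R] [MulOneClass G] {u v : R[G]}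

theorem mul_eq_one_of_uniqueMul (huv : u * v = 1) {a b : G} (ha : a ∈ u.coeff.support)
    (hb : b ∈ v.coeff.support) (hab : UniqueMul u.coeff.support v.coeff.support a b) :
    a * b = 1 := by
  have hmem : a * b ∈ (1 : R[G]).coeff.support := by
    rw [← huv, Finsupp.mem_support_iff, coeff_mul_mul_of_uniqueMul hab]
    exact mul_ne_zero (Finsupp.mem_support_iff.mp ha) (Finsupp.mem_support_iff.mp hb)
  simpa using support_coeff_one_subset hmem

theorem card_support_mul_card_support_le_one [TwoUniqueProds G] (huv : u * v = 1) :
    #u.coeff.support * #v.coeff.support ≤ 1 := by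
  by_contra! hcard
  obtain ⟨p, hp, q, hq, hpq, hp_uniq, hq_uniq⟩ := TwoUniqueProds.uniqueMul_of_one_lt_card hcard
  rw [mem_product] at hp hq
  have hpq_mul : q.1 * q.2 = p.1 * p.2 :=
    (mul_eq_one_of_uniqueMul huv hq.1 hq.2 hq_uniq).trans
      (mul_eq_one_of_uniqueMul huv hp.1 hp.2 hp_uniq).symm
  exact hpq (Prod.ext_iff.mpr (hp_uniq hq.1 hq.2 hpq_mul)).symm

theorem exists_eq_single_of_mul_eq_one [Nontrivial R] [TwoUniqueProds G] (huv : u * v = 1) :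
    ∃ g r, u = single g r ∧ ∃ s, r * s = 1 := by
  have hu : 0 < #u.coeff.support := by
    simpa [card_pos] using left_ne_zero_of_mul_eq_one huv
  have hv : 0 < #v.coeff.support := by
    simpa [card_pos] using right_ne_zero_of_mul_eq_one huv
  have hcard := card_support_mul_card_support_le_one huv
  have hu_one : #u.coeff.support = 1 := by nlinarith
  have hv_one : #v.coeff.support = 1 := by nlinarith
  obtain ⟨g, r, -, hu_eq⟩ := Finsupp.card_support_eq_one'.mp hu_one
  obtain ⟨g', s, -, hv_eq⟩ := Finsupp.card_support_eq_one'.mp hv_one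
  replace hu_eq : u = single g r := coeff_injective hu_eq
  replace hv_eq : v = single g' s := coeff_injective hv_eq
  rw [hu_eq, hv_eq, single_mul_single, one_def, single_inj] at huv
  exact ⟨g, r, hu_eq, s, huv.resolve_right (fun h ↦ one_ne_zero h.2) |>.2⟩

end UniqueProds

theorem isPositive_single_iff {H : Type*} [LinearOrder H] {h : H} {r : ℤ} :
    IsPositive (single h r) ↔ 0 < r := by
  by_cases hr : r = 0 <;> simp [IsPositive, hr]

end MonoidAlgebra

/-- If `H` is a right-ordered group, then a positive element `u` of the group ring `ℤH`
has a multiplicative inverse which is again positive if and only if `u` is an element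
of `H` (i.e. `u = single h 1` for some `h ∈ H`): `U(R^{>0}) = H`. -/
theorem monoidAlgebra_positive_units
    (H : Type*) [Group H] [LinearOrder H]
    (hro : ∀ a b c : H, a < b → a * c < b * c)
    (u : MonoidAlgebra ℤ H) (hu : MonoidAlgebra.IsPositive u) :
    (∃ v : MonoidAlgebra ℤ H, MonoidAlgebra.IsPositive v ∧ u * v = 1 ∧ v * u = 1) ↔
      ∃ h : H, u = MonoidAlgebra.single h 1 := by
  have : MulRightStrictMono H := ⟨fun c _ _ hab ↦ hro _ _ c hab⟩
  constructor
  · rintro ⟨v, -, huv, -⟩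
    obtain ⟨h, r, rfl, s, hrs⟩ := MonoidAlgebra.exists_eq_single_of_mul_eq_one huv
    have hr : r = 1 :=
      Int.eq_one_of_mul_eq_one_right (MonoidAlgebra.isPositive_single_iff.mp hu).le hrs
    exact ⟨h, hr ▸ rfl⟩
  · rintro ⟨h, rfl⟩
    exact ⟨MonoidAlgebra.single h⁻¹ 1, MonoidAlgebra.isPositive_single_iff.mpr one_pos,
      by simp [MonoidAlgebra.one_def], by simp [MonoidAlgebra.one_def]⟩
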